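/- arXiv:cs/0412111 — 5 statements merged into one kernel-verified Lean document; each statement's English description precedes it below -/
import Mathlib

section
/- Let (Ω, P) be a finite probability space and let A_1, …, A_M ⊆ Ω be events with P(A_i) > 0 for every i. Then P(⋃_{i=1}^{M} A_i) ≥ Σ_{i=1}^{M} P(A_i)^2 / ( Σ_{j=1}^{M} P(A_i ∩ A_j) ). -/
open Finset

/-- **De Caen's lower bound** on the probability of a finite union of events:
if `(Ω, P)` is a finite probability space and `A 1, …, A M` are events of positive
probability, then `P(⋃ i, A i) ≥ ∑ i P(A i)² / (∑ j P(A i ∩ A j))`. -/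
theorem deCaen_lower_bound_union {Ω : Type*} [Fintype Ω] [DecidableEq Ω]
    (P : Ω → ℝ) (hP : ∀ y, 0 ≤ P y) (hPsum : ∑ y, P y = 1)
    (M : ℕ) (A : Fin M → Finset Ω)
    (hpos : ∀ i, 0 < ∑ y ∈ A i, P y) :
    ∑ i : Fin M, (∑ y ∈ A i, P y) ^ 2 / (∑ j : Fin M, ∑ y ∈ A i ∩ A j, P y)
      ≤ ∑ y ∈ Finset.univ.biUnion A, P y := by
  classical
  set d : Ω → ℝ := fun y => ((Finset.univ.filter fun i : Fin M => y ∈ A i).card : ℝ) with hd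
  have hd_pos : ∀ {i : Fin M} {y : Ω}, y ∈ A i → 0 < d y := by
    intro i y hy
    have h1 : i ∈ Finset.univ.filter fun i : Fin M => y ∈ A i := by simp [hy]
    have h2 := Finset.card_pos.2 ⟨i, h1⟩
    simp only [hd]
    exact_mod_cast h2
  -- per-element expansion: for any function c, ∑ i, ∑_{y ∈ univ.filter (y ∈ A i)}
  have hexp : ∀ (s : Finset Ω), (∀ i, A i ⊆ s) → ∀ (c : Ω → ℝ),
      (∑ i : Fin M, ∑ y ∈ A i, c y) = ∑ y ∈ s, c y * d y := by
    intro s hs c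
    have : ∀ i : Fin M, (∑ y ∈ A i, c y) = ∑ y ∈ s, if y ∈ A i then c y else 0 := by
      intro i
      rw [Finset.sum_ite_mem, Finset.inter_eq_right.2 (hs i)]
    simp_rw [this]
    rw [Finset.sum_comm]
    refine Finset.sum_congr rfl fun y _ => ?_
    rw [← Finset.sum_filter, Finset.sum_const, nsmul_eq_mul, hd, mul_comm]
  have hden : ∀ i : Fin M, (∑ j : Fin M, ∑ y ∈ A i ∩ A j, P y)
      = ∑ y ∈ A i, P y * d y := by
    intro i
    have h1 : ∀ j : Fin M, (∑ y ∈ A i ∩ A j, P y) = ∑ y ∈ A i, if y ∈ A j then P y else 0 := by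
      intro j; rw [Finset.sum_ite_mem]
    simp_rw [h1]
    rw [Finset.sum_comm]
    refine Finset.sum_congr rfl fun y _ => ?_
    rw [← Finset.sum_filter, Finset.sum_const, nsmul_eq_mul, hd, mul_comm]
  have key : ∀ i : Fin M,
      (∑ y ∈ A i, P y) ^ 2 / (∑ j : Fin M, ∑ y ∈ A i ∩ A j, P y)
        ≤ ∑ y ∈ A i, P y / d y := by
    intro i
    rw [hden i]
    have hnum : (∑ y ∈ A i, P y) ^ 2 ≤ (∑ y ∈ A i, P y / d y) * ∑ y ∈ A i, P y * d y := by
      refine Finset.sum_sq_le_sum_mul_sum_of_sq_eq_mul _ ?_ ?_ ?_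
      · intro y hy; exact div_nonneg (hP y) (hd_pos hy).le
      · intro y hy; exact mul_nonneg (hP y) (hd_pos hy).le
      · intro y hy
        have hne := (hd_pos hy).ne'
        field_simp
    have hdenpos : 0 < ∑ y ∈ A i, P y * d y := by
      calc 0 < ∑ y ∈ A i, P y := hpos i
        _ ≤ ∑ y ∈ A i, P y * d y := by
            refine Finset.sum_le_sum fun y hy => ?_
            have h1 : i ∈ Finset.univ.filter fun i : Fin M => y ∈ A i := by simp [hy]
            have h2 : (1:ℕ) ≤ (Finset.univ.filter fun i : Fin M => y ∈ A i).card :=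
              Finset.card_pos.2 ⟨i, h1⟩
            have h3 : (1:ℝ) ≤ d y := by simp only [hd]; exact_mod_cast h2
            nlinarith [hP y]
    exact div_le_of_le_mul₀ hdenpos.le
      (Finset.sum_nonneg fun y hy => div_nonneg (hP y) (hd_pos hy).le) hnum
  calc ∑ i : Fin M, (∑ y ∈ A i, P y) ^ 2 / (∑ j : Fin M, ∑ y ∈ A i ∩ A j, P y)
      ≤ ∑ i : Fin M, ∑ y ∈ A i, P y / d y := Finset.sum_le_sum fun i _ => key i
    _ = ∑ y ∈ Finset.univ.biUnion A, (P y / d y) * d y :=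
        hexp _ (fun i => Finset.subset_biUnion_of_mem A (Finset.mem_univ i)) _
    _ = ∑ y ∈ Finset.univ.biUnion A, P y := by
        refine Finset.sum_congr rfl fun y hy => ?_
        obtain ⟨i, -, hi⟩ := Finset.mem_biUnion.1 hy
        field_simp [(hd_pos hi).ne']
end

section
/- Let (Ω, P) be a finite probability space with point masses P(y) for y ∈ Ω, let A_1, …, A_M ⊆ Ω be events, and let m : Ω → ℝ_{≥0} be a nonnegative weight function such that Σ_{y ∈ A_i} P(y) m(y)^2 > 0 for every i. Then P(⋃_{i=1}^{M} A_i) ≥ Σ_{i=1}^{M} ( Σ_{y ∈ A_i} P(y) m(y) )^2 / ( Σ_{j=1}^{M} Σ_{y ∈ A_i ∩ A_j} P(y) m(y)^2 ). -/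
open Finset

/-- **The Cohen–Merhav weighted generalization of de Caen's inequality**: for a
finite probability space `(Ω, P)`, events `A 1, …, A M`, and a nonnegative weight
function `m` with `∑_{y ∈ A i} P(y) m(y)² > 0` for every `i`,
`P(⋃ i, A i) ≥ ∑ i (∑_{y ∈ A i} P(y) m(y))² / (∑ j ∑_{y ∈ A i ∩ A j} P(y) m(y)²)`. -/
theorem cohen_merhav_lower_bound_union {Ω : Type*} [Fintype Ω] [DecidableEq Ω]
    (P : Ω → ℝ) (hP : ∀ y, 0 ≤ P y) (hPsum : ∑ y, P y = 1)
    (M : ℕ) (A : Fin M → Finset Ω)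
    (m : Ω → ℝ) (hm : ∀ y, 0 ≤ m y)
    (hpos : ∀ i, 0 < ∑ y ∈ A i, P y * m y ^ 2) :
    ∑ i : Fin M, (∑ y ∈ A i, P y * m y) ^ 2
        / (∑ j : Fin M, ∑ y ∈ A i ∩ A j, P y * m y ^ 2)
      ≤ ∑ y ∈ Finset.univ.biUnion A, P y := by
  classical
  set N : Ω → ℕ := fun y => (Finset.univ.filter (fun j : Fin M => y ∈ A j)).card with hN
  have hNpos : ∀ ⦃i : Fin M⦄ ⦃y⦄, y ∈ A i → 0 < N y := by
    intro i y hy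
    exact Finset.card_pos.2 ⟨i, by simp [hy]⟩
  -- rewrite denominator
  have hden : ∀ i : Fin M, ∑ j : Fin M, ∑ y ∈ A i ∩ A j, P y * m y ^ 2
      = ∑ y ∈ A i, (N y : ℝ) * (P y * m y ^ 2) := by
    intro i
    have : ∀ j : Fin M, ∑ y ∈ A i ∩ A j, P y * m y ^ 2
        = ∑ y ∈ A i, if y ∈ A j then P y * m y ^ 2 else 0 := by
      intro j; rw [Finset.sum_ite_mem]
    simp_rw [this]
    rw [Finset.sum_comm]
    refine Finset.sum_congr rfl fun y hy => ?_
    rw [← Finset.sum_filter, Finset.sum_const, nsmul_eq_mul]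
  -- per-i bound
  have key : ∀ i : Fin M, (∑ y ∈ A i, P y * m y) ^ 2
      / (∑ j : Fin M, ∑ y ∈ A i ∩ A j, P y * m y ^ 2)
      ≤ ∑ y ∈ A i, P y / N y := by
    intro i
    rw [hden i]
    have hDpos : 0 < ∑ y ∈ A i, (N y : ℝ) * (P y * m y ^ 2) := by
      refine lt_of_lt_of_le (hpos i) (Finset.sum_le_sum fun y hy => ?_)
      have h1 : (1 : ℝ) ≤ (N y : ℝ) := by
        exact_mod_cast Nat.one_le_iff_ne_zero.2 (hNpos hy).ne'
      nlinarith [mul_nonneg (hP y) (sq_nonneg (m y))]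
    rw [div_le_iff₀ hDpos]
    refine Finset.sum_sq_le_sum_mul_sum_of_sq_eq_mul (A i)
      (fun y hy => div_nonneg (hP y) (Nat.cast_nonneg _))
      (fun y hy => mul_nonneg (Nat.cast_nonneg _) (mul_nonneg (hP y) (sq_nonneg _)))
      (fun y hy => ?_)
    have hN0 : (N y : ℝ) ≠ 0 := by exact_mod_cast (hNpos hy).ne'
    field_simp
  refine le_trans (Finset.sum_le_sum fun i _ => key i) ?_
  -- swap sums
  have hswap : ∑ i : Fin M, ∑ y ∈ A i, P y / N y
      = ∑ y ∈ Finset.univ.biUnion A, (N y : ℝ) * (P y / N y) := by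
    have : ∀ i : Fin M, ∑ y ∈ A i, P y / N y
        = ∑ y ∈ Finset.univ.biUnion A, if y ∈ A i then P y / N y else 0 := by
      intro i
      rw [Finset.sum_ite_mem]
      congr 1
      rw [Finset.inter_eq_right.2 (Finset.subset_biUnion_of_mem A (Finset.mem_univ i))]
    simp_rw [this]
    rw [Finset.sum_comm]
    refine Finset.sum_congr rfl fun y hy => ?_
    rw [← Finset.sum_filter, Finset.sum_const, nsmul_eq_mul]
  rw [hswap]
  refine le_of_eq (Finset.sum_congr rfl fun y hy => ?_)
  obtain ⟨i, _, hi⟩ := Finset.mem_biUnion.1 hy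
  have hN0 : (N y : ℝ) ≠ 0 := by exact_mod_cast (hNpos hi).ne'
  field_simp
end

section
/- Let n ≥ 1, let X = {0,1}^n with Hamming distance d, let 0 < p < 1/2, and set P(y|x) = p^{d(x,y)}(1−p)^{n−d(x,y)}. Let C ⊆ X be a code, dec : X → C a maximum-likelihood decoder, x_i ∈ C, and P_e(x_i) = Σ_{y : dec(y) ≠ x_i} P(y|x_i). Fix 1 ≤ w ≤ n, let C(i) = { x ∈ C : d(x, x_i) = w }, and for x_j ∈ C(i) set X_{ij} = { y ∈ X : d(x_j, y) < d(x_i, y) }. Let η : {0, 1, …, n} → ℝ_{≥0} be any weight function such that Σ_{y ∈ X_{ij}} P(y|x_i) η(d(x_i,y))^2 > 0 for every x_j ∈ C(i). Then P_e(x_i) ≥ Σ_{x_j ∈ C(i)} ( Σ_{y ∈ X_{ij}} P(y|x_i) η(d(x_i,y)) )^2 / ( Σ_{x_k ∈ C(i)} Σ_{y ∈ X_{ij} ∩ X_{ik}} P(y|x_i) η(d(x_i,y))^2 ). -/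
open Finset

/-- Transition probabilities of the binary symmetric channel with crossover
probability `p`: `P(y|x) = p^{d(x,y)} (1-p)^{n-d(x,y)}`. -/
noncomputable def bscProb (n : ℕ) (p : ℝ) (x y : Fin n → Bool) : ℝ :=
  p ^ hammingDist x y * (1 - p) ^ (n - hammingDist x y)

/-- Error probability of decoding with decoder `dec` given that `xi` was sent:
`P_e(x_i) = ∑_{y : dec y ≠ x_i} P(y|x_i)`. -/
noncomputable def errProb (n : ℕ) (p : ℝ)
    (dec : (Fin n → Bool) → (Fin n → Bool)) (xi : Fin n → Bool) : ℝ :=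
  ∑ y ∈ Finset.univ.filter (fun y => dec y ≠ xi), bscProb n p xi y

/-- The half-space event `X_{ij} = {y : d(x_j, y) < d(x_i, y)}`. -/
def halfSpace (n : ℕ) (xi xj : Fin n → Bool) : Finset (Fin n → Bool) :=
  Finset.univ.filter (fun y => hammingDist xj y < hammingDist xi y)

/-!
Weighted de Caen inequality. Let `m y` count the events `A k` containing `y`. For each `j`, the
Cauchy–Schwarz inequality with the split `μ g = √(μ / m) · √(m μ g²)` bounds
`(∑_{A j} μ g)² / ∑_{A j} m μ g²` by `∑_{A j} μ / m`, and the denominator is exactly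
`∑_k ∑_{A j ∩ A k} μ g²`. Summing over `j`, every point of the union is counted `m y` times, so
the bounds add up to the `μ`-mass of the union of the events. For the binary symmetric channel the
half-space events around codewords `x_j ∈ C` are contained in the error event of any
maximum-likelihood decoder.
-/

namespace DeCaen

variable {ι α : Type*} [DecidableEq α] (S : Finset ι) (A : ι → Finset α)

def coverCount (y : α) : ℕ := #{k ∈ S | y ∈ A k}

variable {S A}

lemma coverCount_pos_iff {y : α} : 0 < coverCount S A y ↔ y ∈ S.biUnion A := by
  simp [coverCount, Finset.card_pos, Finset.Nonempty]

lemma coverCount_pos {j : ι} (hj : j ∈ S) {y : α} (hy : y ∈ A j) : 0 < coverCount S A y :=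
  coverCount_pos_iff.2 (Finset.mem_biUnion.2 ⟨j, hj, hy⟩)

lemma sum_sum_inter_eq_sum_coverCount_mul {R : Type*} [NonAssocSemiring R]
    (T : Finset α) (F : α → R) :
    ∑ k ∈ S, ∑ y ∈ T ∩ A k, F y = ∑ y ∈ T, (coverCount S A y : R) * F y := by
  simp_rw [← Finset.filter_mem_eq_inter, Finset.sum_filter]
  rw [Finset.sum_comm]
  refine Finset.sum_congr rfl fun y _ => ?_
  rw [← Finset.sum_filter, Finset.sum_const, nsmul_eq_mul]
  rfl

lemma sum_sum_div_coverCount {μ : α → ℝ} :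
    ∑ j ∈ S, ∑ y ∈ A j, μ y / coverCount S A y = ∑ y ∈ S.biUnion A, μ y := by
  have hcover : ∀ j ∈ S, A j = S.biUnion A ∩ A j := fun j hj =>
    (Finset.inter_eq_right.2 (Finset.subset_biUnion_of_mem A hj)).symm
  rw [Finset.sum_congr rfl fun j hj => by rw [hcover j hj], sum_sum_inter_eq_sum_coverCount_mul]
  refine Finset.sum_congr rfl fun y hy => ?_
  have hm : (coverCount S A y : ℝ) ≠ 0 := by exact_mod_cast (coverCount_pos_iff.2 hy).ne'
  exact mul_div_cancel₀ _ hm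

variable {μ : α → ℝ}

lemma sq_sum_le_sum_div_coverCount_mul (hμ : ∀ y, 0 ≤ μ y) (g : α → ℝ) {j : ι} (hj : j ∈ S) :
    (∑ y ∈ A j, μ y * g y) ^ 2 ≤
      (∑ y ∈ A j, μ y / coverCount S A y) *
        ∑ y ∈ A j, (coverCount S A y : ℝ) * (μ y * g y ^ 2) := by
  refine Finset.sum_sq_le_sum_mul_sum_of_sq_le_mul (A j)
    (fun y _ => div_nonneg (hμ y) (Nat.cast_nonneg _))
    (fun y _ => mul_nonneg (Nat.cast_nonneg _) (mul_nonneg (hμ y) (sq_nonneg _)))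
    (fun y hy => le_of_eq ?_)
  have hm : (coverCount S A y : ℝ) ≠ 0 := by exact_mod_cast (coverCount_pos hj hy).ne'
  field_simp

theorem sum_sq_div_le_sum_biUnion (hμ : ∀ y, 0 ≤ μ y) (g : α → ℝ) :
    ∑ j ∈ S, (∑ y ∈ A j, μ y * g y) ^ 2 / ∑ k ∈ S, ∑ y ∈ A j ∩ A k, μ y * g y ^ 2 ≤
      ∑ y ∈ S.biUnion A, μ y := by
  rw [← sum_sum_div_coverCount]
  refine Finset.sum_le_sum fun j hj => ?_
  rw [sum_sum_inter_eq_sum_coverCount_mul]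
  exact div_le_of_le_mul₀
    (Finset.sum_nonneg fun y _ => mul_nonneg (Nat.cast_nonneg _) (mul_nonneg (hμ y) (sq_nonneg _)))
    (Finset.sum_nonneg fun y _ => div_nonneg (hμ y) (Nat.cast_nonneg _))
    (sq_sum_le_sum_div_coverCount_mul hμ g hj)

end DeCaen

lemma bscProb_nonneg {n : ℕ} {p : ℝ} (hp0 : 0 ≤ p) (hp1 : p ≤ 1) (x y : Fin n → Bool) :
    0 ≤ bscProb n p x y :=
  mul_nonneg (pow_nonneg hp0 _) (pow_nonneg (sub_nonneg.2 hp1) _)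

lemma biUnion_halfSpace_subset_decodingError {n : ℕ} {C : Finset (Fin n → Bool)}
    {dec : (Fin n → Bool) → (Fin n → Bool)}
    (hML : ∀ y, ∀ x ∈ C, hammingDist y (dec y) ≤ hammingDist y x)
    (xi : Fin n → Bool) {S : Finset (Fin n → Bool)} (hSC : S ⊆ C) :
    S.biUnion (halfSpace n xi) ⊆ univ.filter (fun y => dec y ≠ xi) := by
  intro y hy
  obtain ⟨xk, hxk, hy⟩ := Finset.mem_biUnion.1 hy
  have hcloser : hammingDist xk y < hammingDist xi y := (Finset.mem_filter.1 hy).2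
  refine Finset.mem_filter.2 ⟨Finset.mem_univ y, fun hdec => ?_⟩
  have hML' := hML y xk (hSC hxk)
  rw [hdec, hammingDist_comm y xi, hammingDist_comm y xk] at hML'
  omega

theorem cohen_merhav_bound_bsc_general
    (n : ℕ) (p : ℝ) (hp0 : 0 < p) (hp : p < 1 / 2)
    (C : Finset (Fin n → Bool))
    (dec : (Fin n → Bool) → (Fin n → Bool))
    (hML : ∀ y, ∀ x ∈ C, hammingDist y (dec y) ≤ hammingDist y x)
    (xi : Fin n → Bool)
    (w : ℕ)
    (η : ℕ → ℝ) :
    ∑ xj ∈ C.filter (fun x => hammingDist x xi = w),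
        (∑ y ∈ halfSpace n xi xj, bscProb n p xi y * η (hammingDist xi y)) ^ 2
          / (∑ xk ∈ C.filter (fun x => hammingDist x xi = w),
              ∑ y ∈ halfSpace n xi xj ∩ halfSpace n xi xk,
                bscProb n p xi y * η (hammingDist xi y) ^ 2)
      ≤ errProb n p dec xi := by
  have hμ : ∀ y, 0 ≤ bscProb n p xi y := bscProb_nonneg hp0.le (by linarith) xi
  calc _ ≤ ∑ y ∈ (C.filter (fun x => hammingDist x xi = w)).biUnion (halfSpace n xi),
          bscProb n p xi y :=
        DeCaen.sum_sq_div_le_sum_biUnion hμ (fun y => η (hammingDist xi y))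
    _ ≤ errProb n p dec xi :=
        Finset.sum_le_sum_of_subset_of_nonneg
          (biUnion_halfSpace_subset_decodingError hML xi (Finset.filter_subset _ C))
          fun y _ _ => hμ y

/-- **The Cohen–Merhav lower bound** on the maximum-likelihood decoding error
probability of a code on the BSC, obtained from the weighted generalization of
de Caen's inequality applied to the half-space events `X_{ij}` over the codewords
`x_j` at distance `w` from the transmitted codeword `x_i`, with an arbitrary
nonnegative weight function `η`. -/
theorem cohen_merhav_bound_bsc
    (n : ℕ) (hn : 1 ≤ n) (p : ℝ) (hp0 : 0 < p) (hp : p < 1 / 2)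
    (C : Finset (Fin n → Bool))
    (dec : (Fin n → Bool) → (Fin n → Bool))
    (hdecC : ∀ y, dec y ∈ C)
    (hML : ∀ y, ∀ x ∈ C, hammingDist y (dec y) ≤ hammingDist y x)
    (xi : Fin n → Bool) (hxi : xi ∈ C)
    (w : ℕ) (hw1 : 1 ≤ w) (hwn : w ≤ n)
    (η : ℕ → ℝ) (hη : ∀ t, 0 ≤ η t)
    (hpos : ∀ xj ∈ C.filter (fun x => hammingDist x xi = w),
      0 < ∑ y ∈ halfSpace n xi xj, bscProb n p xi y * η (hammingDist xi y) ^ 2) :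
    ∑ xj ∈ C.filter (fun x => hammingDist x xi = w),
        (∑ y ∈ halfSpace n xi xj, bscProb n p xi y * η (hammingDist xi y)) ^ 2
          / (∑ xk ∈ C.filter (fun x => hammingDist x xi = w),
              ∑ y ∈ halfSpace n xi xj ∩ halfSpace n xi xk,
                bscProb n p xi y * η (hammingDist xi y) ^ 2)
      ≤ errProb n p dec xi :=
  cohen_merhav_bound_bsc_general n p hp0 hp C dec hML xi w η
end

section
/- Let 0 < p < 1/2 and for a positive integer w define π(w) = Σ_{t = ⌈w/2⌉}^{w} C(w, t) p^t (1−p)^{w−t}, where C(w,t) is the binomial coefficient. Then lim_{w → ∞} (1/w) log₂ π(w) = log₂( 2√(p(1−p)) ). -/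
open Finset Filter

/-- The pairwise error probability `π(w)` for two codewords at Hamming distance `w`
on a BSC with crossover probability `p`: the probability that at least `⌈w/2⌉` of the
`w` positions in which they differ are flipped by the channel. -/
noncomputable def pairwiseErr (p : ℝ) (w : ℕ) : ℝ :=
  ∑ t ∈ Finset.Icc ((w + 1) / 2) w, (w.choose t : ℝ) * p ^ t * (1 - p) ^ (w - t)

lemma pairwiseErr_lower {p : ℝ} (hp0 : 0 < p) (hp : p < 1 / 2) (w : ℕ) :
    ((w : ℝ) + 1)⁻¹ * 2 ^ w * p ^ ((w + 1) / 2) * (1 - p) ^ (w - (w + 1) / 2)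
      ≤ pairwiseErr p w := by
  have hq : 0 < 1 - p := by linarith
  have hm : (w + 1) / 2 ≤ w := by omega
  set m := (w + 1) / 2 with hmdef
  have key : ((w : ℝ) + 1)⁻¹ * 2 ^ w ≤ (w.choose m : ℝ) := by
    have h1 : 2 ^ w ≤ (w + 1) * w.choose (w / 2) := by
      calc 2 ^ w = ∑ i ∈ range (w + 1), w.choose i := (Nat.sum_range_choose w).symm
        _ ≤ ∑ _i ∈ range (w + 1), w.choose (w / 2) :=
            Finset.sum_le_sum fun i _ => Nat.choose_le_middle i w
        _ = (w + 1) * w.choose (w / 2) := by simp [mul_comm]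
    have h2 : w.choose (w / 2) = w.choose m := by
      rw [← Nat.choose_symm (Nat.div_le_self w 2)]
      congr 1; omega
    rw [h2] at h1
    rw [inv_mul_le_iff₀ (by positivity)]
    calc (2:ℝ) ^ w ≤ ((w + 1) * w.choose m : ℕ) := by exact_mod_cast h1
      _ = ((w : ℝ) + 1) * (w.choose m : ℝ) := by push_cast; ring

  have hmem : m ∈ Finset.Icc m w := Finset.mem_Icc.mpr ⟨le_rfl, hm⟩
  have hterm : (w.choose m : ℝ) * p ^ m * (1 - p) ^ (w - m) ≤ pairwiseErr p w :=
    Finset.single_le_sum (f := fun t => (w.choose t : ℝ) * p ^ t * (1 - p) ^ (w - t))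
      (fun i _ => by positivity) hmem
  refine le_trans ?_ hterm
  have := mul_le_mul_of_nonneg_right key (by positivity : (0:ℝ) ≤ p ^ m * (1 - p) ^ (w - m))
  calc ((w:ℝ)+1)⁻¹ * 2 ^ w * p ^ m * (1-p) ^ (w - m)
      = ((w:ℝ)+1)⁻¹ * 2 ^ w * (p ^ m * (1-p) ^ (w - m)) := by ring
    _ ≤ (w.choose m : ℝ) * (p ^ m * (1-p) ^ (w - m)) := this
    _ = (w.choose m : ℝ) * p ^ m * (1-p) ^ (w - m) := by ring

lemma pairwiseErr_upper {p : ℝ} (hp0 : 0 < p) (hp : p < 1 / 2) (w : ℕ) :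
    pairwiseErr p w ≤ ((w : ℝ) + 1) * 2 ^ w * p ^ ((w + 1) / 2) * (1 - p) ^ (w - (w + 1) / 2) := by
  have hq : 0 < 1 - p := by linarith
  have hpq : p ≤ 1 - p := by linarith
  set m := (w + 1) / 2 with hmdef
  have hbound : ∀ t ∈ Finset.Icc m w,
      (w.choose t : ℝ) * p ^ t * (1 - p) ^ (w - t) ≤ 2 ^ w * (p ^ m * (1 - p) ^ (w - m)) := by
    intro t ht
    obtain ⟨hmt, htw⟩ := Finset.mem_Icc.mp ht
    have hc : (w.choose t : ℝ) ≤ 2 ^ w := by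
      have : w.choose t ≤ 2 ^ w := by
        calc w.choose t ≤ w.choose (w / 2) := Nat.choose_le_middle t w
          _ ≤ 2 ^ w := by
            rw [← Nat.sum_range_choose w]
            exact Finset.single_le_sum (f := fun i => w.choose i) (fun i _ => Nat.zero_le _)
              (Finset.mem_range.mpr (by omega))
      exact_mod_cast this
    have hpw : p ^ t * (1 - p) ^ (w - t) ≤ p ^ m * (1 - p) ^ (w - m) := by
      have h1 : p ^ t = p ^ m * p ^ (t - m) := by rw [← pow_add]; congr 1; omega
      have h2 : (1 - p) ^ (w - m) = (1 - p) ^ (w - t) * (1 - p) ^ (t - m) := by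
        rw [← pow_add]; congr 1; omega
      rw [h1, h2]
      have h3 : p ^ (t - m) ≤ (1 - p) ^ (t - m) := pow_le_pow_left₀ hp0.le hpq _
      calc p ^ m * p ^ (t-m) * (1-p) ^ (w-t)
          ≤ p ^ m * (1-p) ^ (t-m) * (1-p) ^ (w-t) := by
            apply mul_le_mul_of_nonneg_right _ (by positivity)
            exact mul_le_mul_of_nonneg_left h3 (by positivity)
        _ = p ^ m * ((1-p) ^ (w-t) * (1-p) ^ (t-m)) := by ring
    calc (w.choose t : ℝ) * p ^ t * (1-p) ^ (w-t)
        = (w.choose t : ℝ) * (p ^ t * (1-p) ^ (w-t)) := by ring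
      _ ≤ 2 ^ w * (p ^ m * (1-p) ^ (w-m)) := by
          apply mul_le_mul hc hpw (by positivity) (by positivity)
  have := Finset.sum_le_card_nsmul _ _ _ hbound
  rw [Nat.card_Icc] at this
  have hcard : ((w + 1 - m : ℕ) : ℝ) ≤ (w : ℝ) + 1 := by
    have : (w + 1 - m : ℕ) ≤ w + 1 := by omega
    exact_mod_cast this
  calc pairwiseErr p w ≤ (w + 1 - m : ℕ) • (2 ^ w * (p ^ m * (1-p) ^ (w-m)) : ℝ) := this
    _ = ((w + 1 - m : ℕ) : ℝ) * (2 ^ w * (p ^ m * (1-p) ^ (w-m))) := by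
        rw [nsmul_eq_mul]
    _ ≤ ((w:ℝ) + 1) * (2 ^ w * (p ^ m * (1-p) ^ (w-m))) := by
        apply mul_le_mul_of_nonneg_right hcard (by positivity)
    _ = ((w:ℝ) + 1) * 2 ^ w * p ^ m * (1-p) ^ (w-m) := by ring

lemma logb_prod {p : ℝ} (hp0 : 0 < p) (hq : 0 < 1 - p) {c : ℝ} (hc : 0 < c) (w a b : ℕ) :
    Real.logb 2 (c * 2 ^ w * p ^ a * (1 - p) ^ b)
      = Real.logb 2 c + w + a * Real.logb 2 p + b * Real.logb 2 (1 - p) := by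
  rw [Real.logb_mul (by positivity) (by positivity),
      Real.logb_mul (by positivity) (by positivity),
      Real.logb_mul (by positivity) (by positivity),
      Real.logb_pow, Real.logb_pow, Real.logb_pow, Real.logb_self_eq_one one_lt_two]
  ring

lemma tendsto_logb_div :
    Tendsto (fun w : ℕ => (w : ℝ)⁻¹ * Real.logb 2 ((w : ℝ) + 1)) atTop (nhds 0) := by
  have h1 : (fun x : ℝ => Real.log (x + 1)) =o[atTop] (fun x : ℝ => x) := by
    have h2 := Real.isLittleO_log_id_atTop.comp_tendsto
      (tendsto_atTop_add_const_right atTop 1 tendsto_id)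
    refine h2.trans_isBigO ?_
    refine Asymptotics.isBigO_iff.mpr ⟨2, ?_⟩
    filter_upwards [eventually_ge_atTop (1:ℝ)] with x hx
    simp only [Function.comp, id]
    rw [Real.norm_eq_abs, Real.norm_eq_abs, abs_of_nonneg (by linarith), abs_of_nonneg (by linarith)]
    linarith
  have hdiv := h1.tendsto_div_nhds_zero
  have h3 := (hdiv.comp tendsto_natCast_atTop_atTop).mul_const (Real.log 2)⁻¹
  have heq : ∀ w : ℕ, (w : ℝ)⁻¹ * Real.logb 2 ((w : ℝ) + 1)
      = Real.log ((w : ℝ) + 1) / (w : ℝ) * (Real.log 2)⁻¹ := fun w => by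
    rw [Real.logb]; ring
  refine Tendsto.congr (fun w => (heq w).symm) ?_
  simpa using h3

lemma tendsto_m_div : Tendsto (fun w : ℕ => ((((w + 1) / 2 : ℕ)) : ℝ) / w) atTop (nhds (1/2)) := by
  have hinv : Tendsto (fun w : ℕ => (w : ℝ)⁻¹) atTop (nhds 0) :=
    tendsto_inv_atTop_zero.comp tendsto_natCast_atTop_atTop
  refine tendsto_of_tendsto_of_tendsto_of_le_of_le' tendsto_const_nhds
    (h := fun w : ℕ => (1:ℝ)/2 + (w : ℝ)⁻¹ * (1/2))
    (by
      have h := (tendsto_const_nhds (x := (1:ℝ)/2) (f := atTop)).add (hinv.mul_const (1/2))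
      rw [zero_mul, add_zero] at h
      exact h)
    ?_ ?_
  · filter_upwards [eventually_ge_atTop 1] with w hw
    have hw0 : (0:ℝ) < w := by exact_mod_cast hw
    rw [le_div_iff₀ hw0]
    have h1 : w ≤ 2 * ((w + 1) / 2) := by omega
    have h1' : (w : ℝ) ≤ 2 * (((w + 1) / 2 : ℕ) : ℝ) := by exact_mod_cast h1
    linarith
  · filter_upwards [eventually_ge_atTop 1] with w hw
    have hw0 : (0:ℝ) < w := by exact_mod_cast hw
    rw [div_le_iff₀ hw0]
    have h1 : 2 * ((w + 1) / 2) ≤ w + 1 := by omega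
    have h1' : 2 * (((w + 1) / 2 : ℕ) : ℝ) ≤ (w : ℝ) + 1 := by exact_mod_cast h1
    have h2 : ((1:ℝ)/2 + (w : ℝ)⁻¹ * (1/2)) * w = (w : ℝ)/2 + 1/2 := by
      field_simp
    rw [h2]; linarith

lemma tendsto_k_div : Tendsto (fun w : ℕ => (((w - (w + 1) / 2 : ℕ)) : ℝ) / w) atTop (nhds (1/2)) := by
  have hinv : Tendsto (fun w : ℕ => (w : ℝ)⁻¹) atTop (nhds 0) :=
    tendsto_inv_atTop_zero.comp tendsto_natCast_atTop_atTop
  refine tendsto_of_tendsto_of_tendsto_of_le_of_le'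
    (g := fun w : ℕ => (1:ℝ)/2 - (w : ℝ)⁻¹ * (1/2))
    (by
      have h := (tendsto_const_nhds (x := (1:ℝ)/2) (f := atTop)).sub (hinv.mul_const (1/2))
      rw [zero_mul, sub_zero] at h
      exact h)
    tendsto_const_nhds ?_ ?_
  · filter_upwards [eventually_ge_atTop 1] with w hw
    have hw0 : (0:ℝ) < w := by exact_mod_cast hw
    rw [le_div_iff₀ hw0]
    have h1 : w - 1 ≤ 2 * (w - (w + 1) / 2) := by omega
    have h1' : (w : ℝ) - 1 ≤ 2 * ((w - (w + 1) / 2 : ℕ) : ℝ) := by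
      have : ((w - 1 : ℕ) : ℝ) ≤ ((2 * (w - (w + 1) / 2) : ℕ) : ℝ) := by exact_mod_cast h1
      push_cast [hw] at this
      linarith
    have h2 : ((1:ℝ)/2 - (w : ℝ)⁻¹ * (1/2)) * w = (w : ℝ)/2 - 1/2 := by
      field_simp
    rw [h2]; linarith
  · filter_upwards [eventually_ge_atTop 1] with w hw
    have hw0 : (0:ℝ) < w := by exact_mod_cast hw
    rw [div_le_iff₀ hw0]
    have h1 : 2 * (w - (w + 1) / 2) ≤ w := by omega
    have h1' : 2 * ((w - (w + 1) / 2 : ℕ) : ℝ) ≤ (w : ℝ) := by exact_mod_cast h1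
    linarith


/-- **The exponent of the pairwise error probability**: for `0 < p < 1/2`,
`lim_{w → ∞} (1/w) log₂ π(w) = log₂(2 √(p(1-p)))`. -/
theorem pairwiseErr_exponent (p : ℝ) (hp0 : 0 < p) (hp : p < 1 / 2) :
    Tendsto (fun w : ℕ => (w : ℝ)⁻¹ * Real.logb 2 (pairwiseErr p w)) atTop
      (nhds (Real.logb 2 (2 * Real.sqrt (p * (1 - p))))) := by
  have hq : 0 < 1 - p := by linarith
  have hsq : 0 < Real.sqrt (p * (1 - p)) := Real.sqrt_pos.mpr (by positivity)
  have hlog2 : Real.log 2 ≠ 0 := (Real.log_pos one_lt_two).ne'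
  have htarget : Real.logb 2 (2 * Real.sqrt (p * (1 - p)))
      = 1 + 1 / 2 * Real.logb 2 p + 1 / 2 * Real.logb 2 (1 - p) := by
    rw [Real.logb_mul two_ne_zero hsq.ne', Real.logb_self_eq_one one_lt_two]
    have h1 : Real.logb 2 (Real.sqrt (p * (1 - p)))
        = (Real.log p + Real.log (1 - p)) / 2 / Real.log 2 := by
      rw [Real.logb, Real.log_sqrt (by positivity), Real.log_mul hp0.ne' hq.ne']
    rw [h1, Real.logb, Real.logb]
    field_simp
    ring
  rw [htarget]
  set lp := Real.logb 2 p with hlp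
  set lq := Real.logb 2 (1 - p) with hlq
  -- squeeze
  refine tendsto_of_tendsto_of_tendsto_of_le_of_le'
    (g := fun w : ℕ => (w : ℝ)⁻¹ *
      (-(Real.logb 2 ((w : ℝ) + 1)) + w + (((w + 1) / 2 : ℕ) : ℝ) * lp + ((w - (w + 1) / 2 : ℕ) : ℝ) * lq))
    (h := fun w : ℕ => (w : ℝ)⁻¹ *
      (Real.logb 2 ((w : ℝ) + 1) + w + (((w + 1) / 2 : ℕ) : ℝ) * lp + ((w - (w + 1) / 2 : ℕ) : ℝ) * lq))
    ?_ ?_ ?_ ?_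
  · -- lower tendsto
    have key := (((tendsto_logb_div.neg.add (tendsto_const_nhds (x := (1:ℝ)) (f := atTop))).add
      (tendsto_m_div.mul_const lp)).add (tendsto_k_div.mul_const lq))
    rw [neg_zero, zero_add] at key
    refine Tendsto.congr' ?_ key
    filter_upwards [eventually_ge_atTop 1] with w hw
    have hw0 : (w : ℝ) ≠ 0 := by positivity
    field_simp
  · -- upper tendsto
    have key := (((tendsto_logb_div.add (tendsto_const_nhds (x := (1:ℝ)) (f := atTop))).add
      (tendsto_m_div.mul_const lp)).add (tendsto_k_div.mul_const lq))
    rw [zero_add] at key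
    refine Tendsto.congr' ?_ key
    filter_upwards [eventually_ge_atTop 1] with w hw
    have hw0 : (w : ℝ) ≠ 0 := by positivity
    field_simp
  · -- lower inequality
    filter_upwards [eventually_ge_atTop 1] with w hw
    have hw0 : (0:ℝ) < w := by exact_mod_cast hw
    have hL := pairwiseErr_lower hp0 hp w
    have hπ : 0 < pairwiseErr p w := lt_of_lt_of_le (by positivity) hL
    have hmono := (Real.logb_le_logb one_lt_two (by positivity) hπ).mpr hL
    rw [logb_prod hp0 hq (by positivity) w _ _, Real.logb_inv] at hmono
    exact mul_le_mul_of_nonneg_left hmono (inv_nonneg.mpr hw0.le)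
  · -- upper inequality
    filter_upwards [eventually_ge_atTop 1] with w hw
    have hw0 : (0:ℝ) < w := by exact_mod_cast hw
    have hL := pairwiseErr_lower hp0 hp w
    have hπ : 0 < pairwiseErr p w := lt_of_lt_of_le (by positivity) hL
    have hU := pairwiseErr_upper hp0 hp w
    have hmono := (Real.logb_le_logb one_lt_two hπ (by positivity)).mpr hU
    rw [logb_prod hp0 hq (by positivity) w _ _] at hmono
    exact mul_le_mul_of_nonneg_left hmono (inv_nonneg.mpr hw0.le)
end

section
/- Let 0 < p < 1/2 and define h(x) = −x log₂ x − (1−x) log₂(1−x), D(x‖y) = x log₂(x/y) + (1−x) log₂((1−x)/(1−y)), A(ω) = ω log₂(2√(p(1−p))), ρ₀ = √p/(√p + √(1−p)), ω₀ = 2ρ₀(1−ρ₀), and R_crit = 1 − h(ρ₀). Let R₁ ∈ ℝ, let g : ℝ → ℝ be differentiable at R₁ with g(R₁) = ω₀ and 0 < g(R) < 1 in a neighborhood of R₁, and define f(R) = 1 − R − h(g(R)) − A(g(R)). Then f(R₁) = D(ρ₀‖p) + R_crit − R₁ and f′(R₁) = −1; that is, the graph of f is tangent at R = R₁ to the straight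 line R ↦ D(ρ₀‖p) + R_crit − R. -/
/-- The binary entropy function `h(x) = −x log₂ x − (1−x) log₂(1−x)`. -/
noncomputable def binEnt (x : ℝ) : ℝ :=
  -x * Real.logb 2 x - (1 - x) * Real.logb 2 (1 - x)

/-- The binary Kullback–Leibler divergence
`D(x‖y) = x log₂(x/y) + (1−x) log₂((1−x)/(1−y))`. -/
noncomputable def binKL (x y : ℝ) : ℝ :=
  x * Real.logb 2 (x / y) + (1 - x) * Real.logb 2 ((1 - x) / (1 - y))

/-- The pairwise error exponent `A(ω) = ω log₂(2√(p(1−p)))`. -/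
noncomputable def Aexp (p ω : ℝ) : ℝ := ω * Real.logb 2 (2 * Real.sqrt (p * (1 - p)))

/-- `ρ₀ = √p / (√p + √(1−p))`. -/
noncomputable def rho0 (p : ℝ) : ℝ := Real.sqrt p / (Real.sqrt p + Real.sqrt (1 - p))

/-!
Since `ρ₀ = √p / (√p + √(1-p))`, one has `ρ₀² = p (1 - ω₀)`, `(1 - ρ₀)² = (1 - p)(1 - ω₀)`
and `2√(p(1-p)) = ω₀ / (1 - ω₀)`: the slope of `A` is the log-odds of `ω₀`. As
`h'(ω) = log₂((1 - ω)/ω)`, the function `h + A` is stationary at `ω₀`, with value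
`-log₂(1 - ω₀)` there; the two square identities give `h(ρ₀) - D(ρ₀‖p) = -log₂(1 - ω₀)`
as well. The chain rule then yields `f'(R₁) = -1`.
-/

open Real

lemma binEnt_eq_binEntropy_div (x : ℝ) : binEnt x = binEntropy x / log 2 := by
  simp only [binEnt, binEntropy, logb, log_inv]
  ring

lemma hasDerivAt_binEnt {x : ℝ} (hx₀ : x ≠ 0) (hx₁ : x ≠ 1) :
    HasDerivAt binEnt (logb 2 ((1 - x) / x)) x := by
  rw [funext binEnt_eq_binEntropy_div, logb, log_div (sub_ne_zero.2 hx₁.symm) hx₀]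
  exact (hasDerivAt_binEntropy hx₀ hx₁).div_const _

lemma binEnt_add_mul_logb_odds {x : ℝ} (hx₀ : x ≠ 0) (hx₁ : x ≠ 1) :
    binEnt x + x * logb 2 (x / (1 - x)) = -logb 2 (1 - x) := by
  rw [binEnt, logb_div hx₀ (sub_ne_zero.2 hx₁.symm)]
  ring

lemma binEnt_sub_binKL_of_sq_eq {x y c : ℝ} (hx₀ : x ≠ 0) (hx₁ : x ≠ 1) (hy₀ : y ≠ 0)
    (hy₁ : y ≠ 1) (h₀ : x ^ 2 = y * c) (h₁ : (1 - x) ^ 2 = (1 - y) * c) :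
    binEnt x - binKL x y = -logb 2 c := by
  have hx₁' : 1 - x ≠ 0 := sub_ne_zero.2 hx₁.symm
  have hy₁' : 1 - y ≠ 0 := sub_ne_zero.2 hy₁.symm
  have hc₀ : logb 2 c = 2 * logb 2 x - logb 2 y := by
    rw [eq_div_of_mul_eq hy₀ (h₀.trans (mul_comm _ _)).symm,
      logb_div (pow_ne_zero 2 hx₀) hy₀, logb_pow]
    norm_num
  have hc₁ : logb 2 c = 2 * logb 2 (1 - x) - logb 2 (1 - y) := by
    rw [eq_div_of_mul_eq hy₁' (h₁.trans (mul_comm _ _)).symm,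
      logb_div (pow_ne_zero 2 hx₁') hy₁', logb_pow]
    norm_num
  rw [binEnt, binKL, logb_div hx₀ hy₀, logb_div hx₁' hy₁']
  linear_combination x * hc₀ + (1 - x) * hc₁

noncomputable def omega0 (p : ℝ) : ℝ := 2 * rho0 p * (1 - rho0 p)

section rho0

variable {p : ℝ}

lemma rho0_pos (hp₀ : 0 < p) : 0 < rho0 p :=
  div_pos (sqrt_pos.2 hp₀) (by positivity)

lemma one_sub_rho0 (hp₀ : 0 < p) : 1 - rho0 p = √(1 - p) / (√p + √(1 - p)) := by
  have : 0 < √p + √(1 - p) := by positivity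
  rw [rho0]
  field_simp
  ring

lemma one_sub_rho0_pos (hp₀ : 0 < p) (hp₁ : p < 1) : 0 < 1 - rho0 p := by
  rw [one_sub_rho0 hp₀]
  exact div_pos (sqrt_pos.2 (sub_pos.2 hp₁)) (by positivity)

lemma one_sub_omega0 (hp₀ : 0 < p) (hp₁ : p < 1) :
    1 - omega0 p = 1 / (√p + √(1 - p)) ^ 2 := by
  have : 0 < √p + √(1 - p) := by positivity
  rw [omega0, one_sub_rho0 hp₀, rho0]
  field_simp
  rw [add_sq, sq_sqrt hp₀.le, sq_sqrt (sub_pos.2 hp₁).le]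
  ring

lemma rho0_sq (hp₀ : 0 < p) (hp₁ : p < 1) : rho0 p ^ 2 = p * (1 - omega0 p) := by
  rw [one_sub_omega0 hp₀ hp₁, rho0, div_pow, sq_sqrt hp₀.le]
  ring

lemma one_sub_rho0_sq (hp₀ : 0 < p) (hp₁ : p < 1) :
    (1 - rho0 p) ^ 2 = (1 - p) * (1 - omega0 p) := by
  rw [one_sub_omega0 hp₀ hp₁, one_sub_rho0 hp₀, div_pow, sq_sqrt (sub_pos.2 hp₁).le]
  ring

lemma omega0_pos (hp₀ : 0 < p) (hp₁ : p < 1) : 0 < omega0 p := by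
  have := rho0_pos hp₀
  have := one_sub_rho0_pos hp₀ hp₁
  rw [omega0]
  positivity

lemma omega0_lt_one (hp₀ : 0 < p) (hp₁ : p < 1) : omega0 p < 1 := by
  have : 0 < 1 - omega0 p := by rw [one_sub_omega0 hp₀ hp₁]; positivity
  linarith

lemma two_sqrt_mul_one_sub_eq_odds (hp₀ : 0 < p) (hp₁ : p < 1) :
    2 * √(p * (1 - p)) = omega0 p / (1 - omega0 p) := by
  have : 0 < √p + √(1 - p) := by positivity
  rw [one_sub_omega0 hp₀ hp₁, omega0, one_sub_rho0 hp₀, rho0, sqrt_mul hp₀.le]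
  field_simp

lemma binEnt_add_Aexp_omega0 (hp₀ : 0 < p) (hp₁ : p < 1) :
    binEnt (omega0 p) + Aexp p (omega0 p) = binEnt (rho0 p) - binKL (rho0 p) p := by
  rw [Aexp, two_sqrt_mul_one_sub_eq_odds hp₀ hp₁,
    binEnt_add_mul_logb_odds (omega0_pos hp₀ hp₁).ne' (omega0_lt_one hp₀ hp₁).ne,
    binEnt_sub_binKL_of_sq_eq (rho0_pos hp₀).ne' (sub_pos.1 (one_sub_rho0_pos hp₀ hp₁)).ne
      hp₀.ne' hp₁.ne (rho0_sq hp₀ hp₁) (one_sub_rho0_sq hp₀ hp₁)]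

lemma hasDerivAt_binEnt_add_Aexp_omega0 (hp₀ : 0 < p) (hp₁ : p < 1) :
    HasDerivAt (fun ω => binEnt ω + Aexp p ω) 0 (omega0 p) := by
  have hA : HasDerivAt (Aexp p) (logb 2 (omega0 p / (1 - omega0 p))) (omega0 p) := by
    rw [← two_sqrt_mul_one_sub_eq_odds hp₀ hp₁]
    exact hasDerivAt_mul_const _
  have h := (hasDerivAt_binEnt (omega0_pos hp₀ hp₁).ne' (omega0_lt_one hp₀ hp₁).ne).add hA
  rwa [← inv_div, logb_inv, neg_add_cancel] at h

end rho0

theorem unionBoundExponent_tangent_to_line_general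
    (p : ℝ) (hp0 : 0 < p) (hp : p < 1 / 2)
    (R₁ : ℝ) (g : ℝ → ℝ) (hg : DifferentiableAt ℝ g R₁)
    (hgval : g R₁ = 2 * rho0 p * (1 - rho0 p)) :
    (1 - R₁ - binEnt (g R₁) - Aexp p (g R₁)
        = binKL (rho0 p) p + (1 - binEnt (rho0 p)) - R₁)
      ∧ HasDerivAt (fun R => 1 - R - binEnt (g R) - Aexp p (g R)) (-1) R₁ := by
  have hp1 : p < 1 := by linarith
  change g R₁ = omega0 p at hgval
  refine ⟨by linarith [hgval ▸ binEnt_add_Aexp_omega0 hp0 hp1], ?_⟩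
  have hφ := hasDerivAt_binEnt_add_Aexp_omega0 hp0 hp1
  rw [← hgval] at hφ
  have h := ((hasDerivAt_id' R₁).const_sub 1).sub (hφ.comp R₁ hg.hasDerivAt)
  rw [zero_mul, sub_zero] at h
  exact h.congr_of_eventuallyEq (.of_forall fun _ => sub_sub _ _ _)

/-- **Tangency of the union-bound exponent to the straight line** (Lemma 1):
let `g` be differentiable at `R₁` with `g R₁ = ω₀ = 2ρ₀(1−ρ₀)` and `0 < g < 1` near
`R₁`, and let `f(R) = 1 − R − h(g R) − A(g R)`.  Then
`f(R₁) = D(ρ₀‖p) + R_crit − R₁` and `f'(R₁) = −1`, i.e. the graph of `f` is tangent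
at `R₁` to the line `R ↦ D(ρ₀‖p) + R_crit − R`. -/
theorem unionBoundExponent_tangent_to_line
    (p : ℝ) (hp0 : 0 < p) (hp : p < 1 / 2)
    (R₁ : ℝ) (g : ℝ → ℝ) (hg : DifferentiableAt ℝ g R₁)
    (hgval : g R₁ = 2 * rho0 p * (1 - rho0 p))
    (hgrange : ∀ᶠ R in nhds R₁, 0 < g R ∧ g R < 1) :
    (1 - R₁ - binEnt (g R₁) - Aexp p (g R₁)
        = binKL (rho0 p) p + (1 - binEnt (rho0 p)) - R₁)
      ∧ HasDerivAt (fun R => 1 - R - binEnt (g R) - Aexp p (g R)) (-1) R₁ :=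
  unionBoundExponent_tangent_to_line_general p hp0 hp R₁ g hg hgval
end
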